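/- For all n ≥ 0: ∑_{k=0}^n [n choose k]_q (q-1)^k q^{r(n-k)} ⟨x⟩_{r,k} = (1-(1-q)x)^n. -/
import Mathlib


noncomputable section

open Finset Polynomial

/-- q-analogue [m] = (1-q^m)/(1-q) = 1 + q + ... + q^(m-1). -/
def qb (q : ℚ) (m : ℕ) : ℚ := ∑ i ∈ Finset.range m, q ^ i

/-- q-factorial [n]! -/
def qfact (q : ℚ) (n : ℕ) : ℚ := ∏ i ∈ Finset.range n, qb q (i + 1)

/-- Gaussian binomial coefficient [n choose k]_q via the q-Pascal recurrence. -/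
def qbinom (q : ℚ) : ℕ → ℕ → ℚ
  | _, 0 => 1
  | 0, _ + 1 => 0
  | n + 1, k + 1 => qbinom q n k + q ^ (k + 1) * qbinom q n (k + 1)

/-- Generalized q-Stirling numbers S(n,k,r). -/
def qS (q : ℚ) (r : ℕ) : ℕ → ℕ → ℚ
  | 0, 0 => 1
  | 0, _ + 1 => 0
  | n + 1, 0 => qb q r * qS q r n 0
  | n + 1, k + 1 => qS q r n k + qb q (k + 1 + r) * qS q r n (k + 1)

/-- Generalized falling factorial ⟨x⟩_{r,k} = ∏_{j=0}^{k-1} (x - [r+j]). -/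
def qfall (q : ℚ) (r : ℕ) (x : ℚ) (k : ℕ) : ℚ := ∏ j ∈ Finset.range k, (x - qb q (r + j))


lemma qbinom_eq_zero (q : ℚ) : ∀ n k : ℕ, n < k → qbinom q n k = 0 := by
  intro n
  induction n with
  | zero => intro k hk; match k, hk with | k + 1, _ => rfl
  | succ n ih =>
    intro k hk
    match k, hk with
    | k + 1, hk =>
      show qbinom q n k + q ^ (k + 1) * qbinom q n (k + 1) = 0
      rw [ih k (by omega), ih (k + 1) (by omega)]; ring

lemma qb_key (q : ℚ) (m : ℕ) : (q - 1) * qb q m = q ^ m - 1 := by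
  rw [qb, mul_comm]; exact geom_sum_mul q m

lemma qfall_succ (q : ℚ) (r : ℕ) (x : ℚ) (k : ℕ) :
    qfall q r x (k + 1) = qfall q r x k * (x - qb q (r + k)) := by
  rw [qfall, qfall, Finset.prod_range_succ]

/-- ∑_k [n choose k]_q (q-1)^k q^{r(n-k)} ⟨x⟩_{r,k} = (1-(1-q)x)^n. -/
theorem qfall_binomial_identity (q : ℚ) (r : ℕ) (n : ℕ) (x : ℚ) :
    ∑ k ∈ Finset.range (n + 1),
        qbinom q n k * (q - 1) ^ k * q ^ (r * (n - k)) * qfall q r x k =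
      (1 - (1 - q) * x) ^ n := by
  induction n with
  | zero => simp [qbinom, qfall]
  | succ n ih =>
    rw [pow_succ, ← ih, mul_comm, Finset.mul_sum, Finset.sum_range_succ']
    have hrhs : ∀ k ∈ Finset.range (n + 1),
        (1 - (1 - q) * x) * (qbinom q n k * (q - 1) ^ k * q ^ (r * (n - k)) * qfall q r x k)
          = qbinom q n k * (q - 1) ^ k * q ^ (r * (n - k)) * qfall q r x k * (q - 1)
              * (x - qb q (r + k))
            + qbinom q n k * (q - 1) ^ k * q ^ (r * (n - k)) * qfall q r x k * q ^ (r + k) := by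
      intro k _
      have h := qb_key q (r + k)
      linear_combination ((qbinom q n k * (q - 1) ^ k * q ^ (r * (n - k)) * qfall q r x k)) * h
    rw [Finset.sum_congr rfl hrhs, Finset.sum_add_distrib]
    have hlhs : ∀ i ∈ Finset.range (n + 1),
        qbinom q (n + 1) (i + 1) * (q - 1) ^ (i + 1) * q ^ (r * (n + 1 - (i + 1)))
            * qfall q r x (i + 1)
          = qbinom q n i * (q - 1) ^ i * q ^ (r * (n - i)) * qfall q r x i * (q - 1)
              * (x - qb q (r + i))
            + q ^ (i + 1) * qbinom q n (i + 1) * (q - 1) ^ (i + 1) * q ^ (r * (n - i))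
                * qfall q r x (i + 1) := by
      intro i _
      have h1 : qbinom q (n + 1) (i + 1) = qbinom q n i + q ^ (i + 1) * qbinom q n (i + 1) := rfl
      have h2 : n + 1 - (i + 1) = n - i := by omega
      rw [h1, h2, qfall_succ]
      ring
    rw [Finset.sum_congr rfl hlhs, Finset.sum_add_distrib, add_assoc]
    congr 1
    -- remaining: second sums plus constant terms match
    rw [Finset.sum_range_succ' (fun k => qbinom q n k * (q - 1) ^ k * q ^ (r * (n - k))
        * qfall q r x k * q ^ (r + k)) n]
    rw [Finset.sum_range_succ]
    have hzero : q ^ (n + 1) * qbinom q n (n + 1) * (q - 1) ^ (n + 1) * q ^ (r * (n - n))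
        * qfall q r x (n + 1) = 0 := by
      rw [qbinom_eq_zero q n (n + 1) (by omega)]; ring
    rw [hzero, add_zero]
    congr 1
    · apply Finset.sum_congr rfl
      intro i hi
      have hi' : i < n := Finset.mem_range.mp hi
      have h3 : r * (n - i) = r * (n - (i + 1)) + r := by
        have : n - i = (n - (i + 1)) + 1 := by omega
        rw [this]; ring
      rw [h3, pow_add,
        show (q : ℚ) ^ (r + (i + 1)) = q ^ r * q ^ (i + 1) by rw [← pow_add]]
      ring
    · show qbinom q (n + 1) 0 * (q - 1) ^ 0 * q ^ (r * (n + 1 - 0)) * qfall q r x 0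
        = qbinom q n 0 * (q - 1) ^ 0 * q ^ (r * (n - 0)) * qfall q r x 0 * q ^ (r + 0)
      simp only [qfall, Finset.prod_range_zero, Nat.sub_zero, Nat.add_zero, pow_zero, mul_one,
        show ∀ m, qbinom q m 0 = 1 from fun m => by cases m <;> rfl, one_mul]
      rw [← pow_add, Nat.mul_succ]
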